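/- arXiv:1410.6772 — 11 statements merged into one kernel-verified Lean document; each statement's English description precedes it below -/
import Mathlib

section
/- Let χ(z) = a₀ + a₁z + ⋯ + aₙzⁿ be a complex polynomial with aₙ ≠ 0, and define its n-inverse χ*(z) = aₙ + aₙ₋₁z + ⋯ + a₀zⁿ. Then all zeros of χ lie in the open unit disk Δ if and only if 0 is not in the image χ*(Δ̄) of the closed unit disk under χ*. -/
/-! Since χ*(z) = zⁿ χ(1/z) for z ≠ 0, the zeros of χ* other than 0 are exactly the reciprocals
of the zeros of χ, and χ*(0) = aₙ ≠ 0. So χ* vanishes somewhere on the closed disk iff χ has a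
zero of modulus ≥ 1. -/

open Finset

theorem sum_reflect_mul_zero_pow {R : Type*} [Semiring R] (n : ℕ) (a : ℕ → R) :
    ∑ k ∈ range (n + 1), a (n - k) * (0 : R) ^ k = a n := by
  rw [sum_range_succ', sum_eq_zero fun k _ => by simp]
  simp

section Reflection

variable {K : Type*} [Field K] (n : ℕ) (a : ℕ → K)

theorem sum_reflect_mul_pow_eq_pow_mul_sum_inv {z : K} (hz : z ≠ 0) :
    ∑ k ∈ range (n + 1), a (n - k) * z ^ k = z ^ n * ∑ k ∈ range (n + 1), a k * z⁻¹ ^ k := by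
  rw [mul_sum, ← sum_range_reflect]
  refine sum_congr rfl fun k hk => ?_
  have hkn : k ≤ n := Nat.lt_succ_iff.mp (mem_range.mp hk)
  rw [Nat.add_sub_cancel, Nat.sub_sub_self hkn, ← pow_mul_pow_sub z hkn, inv_pow]
  field_simp

theorem sum_reflect_mul_pow_eq_zero_iff {z : K} (hz : z ≠ 0) :
    ∑ k ∈ range (n + 1), a (n - k) * z ^ k = 0 ↔ ∑ k ∈ range (n + 1), a k * z⁻¹ ^ k = 0 := by
  rw [sum_reflect_mul_pow_eq_pow_mul_sum_inv n a hz, mul_eq_zero, or_iff_right (pow_ne_zero n hz)]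

end Reflection

theorem stability_iff_n_inverse_nonzero_on_closed_disk
    (n : ℕ) (a : ℕ → ℂ) (han : a n ≠ 0)
    (χ : ℂ → ℂ) (hχ : ∀ z, χ z = ∑ k ∈ Finset.range (n + 1), a k * z ^ k)
    (χs : ℂ → ℂ) (hχs : ∀ z, χs z = ∑ k ∈ Finset.range (n + 1), a (n - k) * z ^ k) :
    (∀ z : ℂ, χ z = 0 → ‖z‖ < 1) ↔
      (∀ z : ℂ, ‖z‖ ≤ 1 → χs z ≠ 0) := by
  have hroot : ∀ z ≠ 0, χs z = 0 ↔ χ z⁻¹ = 0 := fun z hz => by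
    rw [hχs, hχ]; exact sum_reflect_mul_pow_eq_zero_iff n a hz
  constructor
  · intro h z hz hzero
    rcases eq_or_ne z 0 with rfl | hz0
    · exact han (by rwa [hχs, sum_reflect_mul_zero_pow] at hzero)
    · have hinv : ‖z‖⁻¹ < 1 := norm_inv z ▸ h _ ((hroot z hz0).mp hzero)
      exact hz.not_gt ((inv_lt_one₀ (norm_pos_iff.mpr hz0)).mp hinv)
  · intro h z hzero
    by_contra! hz
    have hz0 : z ≠ 0 := by rintro rfl; norm_num at hz
    refine h z⁻¹ ?_ ((hroot _ (inv_ne_zero hz0)).mpr (by rwa [inv_inv]))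
    rw [norm_inv]
    exact inv_le_one_of_one_le₀ hz
end

section
/- Let q(z) = q̂(1)z + q̂(2)z² + ⋯ + q̂(n)zⁿ be a complex polynomial with q(0) = 0, and let w ∈ ℂ be a point not in the image q(Δ) of the open unit disk. Then for every k with 1 ≤ k ≤ n, the coefficient bound |q̂(k)| ≤ C(n,k)·|w| holds, where C(n,k) is the binomial coefficient. -/
/-!
The polynomial `w - q` has no zeros in the open unit disk, so each of its roots contributes
`max 1 ‖a‖ = ‖a‖` to its Mahler measure, which is therefore `‖w - q 0‖ = ‖w‖`. Mahler's
inequality `‖coeff k‖ ≤ C(deg, k) · M(p)` then bounds the coefficients `-q̂(k)` of `w - q`.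
-/

open Polynomial

namespace Polynomial

theorem mahlerMeasure_eq_norm_eval_zero {p : ℂ[X]} (hp : ∀ z, ‖z‖ < 1 → p.eval z ≠ 0) :
    p.mahlerMeasure = ‖p.eval 0‖ := by
  have hroots : ∀ a ∈ p.roots, 1 ≤ ‖a‖ := fun a ha ↦
    not_lt.mp fun h ↦ hp a h (isRoot_of_mem_roots ha)
  rw [mahlerMeasure_eq_leadingCoeff_mul_prod_roots, (IsAlgClosed.splits p).eval_eq_prod_roots,
    norm_mul]
  congr 1
  rw [← normHom_apply, map_multiset_prod, Multiset.map_map]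
  refine congrArg _ (Multiset.map_congr rfl fun a ha ↦ ?_)
  simp [max_eq_right (hroots a ha)]

theorem norm_coeff_le_choose_mul_norm_coeff_zero {p : ℂ[X]}
    (hp : ∀ z, ‖z‖ < 1 → p.eval z ≠ 0) (k : ℕ) :
    ‖p.coeff k‖ ≤ p.natDegree.choose k * ‖p.coeff 0‖ := by
  rw [coeff_zero_eq_eval_zero, ← mahlerMeasure_eq_norm_eval_zero hp]
  exact norm_coeff_le_choose_mul_mahlerMeasure k p

end Polynomial

theorem coeff_bound_of_omitted_value
    (n : ℕ) (qh : ℕ → ℂ)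
    (q : ℂ → ℂ) (hq : ∀ z, q z = ∑ k ∈ Finset.Icc 1 n, qh k * z ^ k)
    (w : ℂ) (hw : ∀ z : ℂ, ‖z‖ < 1 → q z ≠ w) :
    ∀ k, 1 ≤ k → k ≤ n → ‖qh k‖ ≤ (n.choose k) * ‖w‖ := by
  intro k hk1 hkn
  set P : ℂ[X] := C w - ∑ j ∈ Finset.Icc 1 n, C (qh j) * X ^ j
  have hP_coeff (i : ℕ) :
      P.coeff i = (if i = 0 then w else 0) - if 1 ≤ i ∧ i ≤ n then qh i else 0 := by
    simp [P, finsetSum_coeff, coeff_C]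
  have hP_coeff_zero : P.coeff 0 = w := by simp [hP_coeff]
  have hP_natDegree : P.natDegree ≤ n := natDegree_le_iff_coeff_eq_zero.mpr fun i hi ↦ by
    rw [hP_coeff, if_neg (by omega), if_neg (by omega), sub_zero]
  have hP_ne_zero (z : ℂ) (hz : ‖z‖ < 1) : P.eval z ≠ 0 := by
    simpa [P, hq, eval_finsetSum, sub_eq_zero] using (hw z hz).symm
  calc ‖qh k‖ = ‖P.coeff k‖ := by
        rw [hP_coeff, if_neg (by omega), if_pos ⟨hk1, hkn⟩, zero_sub, norm_neg]
    _ ≤ P.natDegree.choose k * ‖P.coeff 0‖ :=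
        norm_coeff_le_choose_mul_norm_coeff_zero hP_ne_zero k
    _ ≤ n.choose k * ‖w‖ := by
      rw [hP_coeff_zero]
      gcongr
end

section
/- The coefficient bound in the previous lemma is sharp: for the polynomial q(z) = w − w(1−z)ⁿ (with w ≠ 0), the point w is not in q(Δ), and for each 1 ≤ k ≤ n the k-th coefficient of q has absolute value exactly C(n,k)·|w|. -/
open Polynomial

theorem Polynomial.coeff_one_sub_X_pow {R : Type*} [CommRing R] (n k : ℕ) :
    ((1 - X : R[X]) ^ n).coeff k = (-1) ^ k * n.choose k := by
  have hsplit : (1 - X : R[X]) ^ n = C ((-1) ^ n) * (X + C (-1)) ^ n := by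
    rw [C_pow, ← mul_pow, C_neg, C_1]
    ring
  rw [hsplit, coeff_C_mul, coeff_X_add_C_pow, ← mul_assoc]
  rcases le_or_gt k n with hkn | hnk
  · obtain ⟨m, rfl⟩ := Nat.exists_eq_add_of_le hkn
    rw [Nat.add_sub_cancel_left, pow_add, mul_assoc ((-1) ^ k), ← mul_pow, neg_one_mul, neg_neg,
      one_pow, mul_one]
  · rw [Nat.choose_eq_zero_of_lt hnk, Nat.cast_zero, mul_zero, mul_zero]

theorem Polynomial.coeff_C_sub_C_mul_one_sub_X_pow {R : Type*} [CommRing R] (w : R) (n : ℕ)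
    {k : ℕ} (hk : k ≠ 0) :
    (C w - C w * (1 - X) ^ n).coeff k = -((-1) ^ k * n.choose k * w) := by
  rw [coeff_sub, coeff_C_mul, coeff_one_sub_X_pow, coeff_C, if_neg hk]
  ring

theorem Polynomial.eval_C_sub_C_mul_one_sub_X_pow_ne {R : Type*} [CommRing R] [IsDomain R]
    {w z : R} (n : ℕ) (hw : w ≠ 0) (hz : z ≠ 1) : (C w - C w * (1 - X) ^ n).eval z ≠ w := by
  have hprod : w * (1 - z) ^ n ≠ 0 := mul_ne_zero hw (pow_ne_zero _ (sub_ne_zero.2 hz.symm))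
  simpa [sub_eq_self] using hprod

theorem coeff_bound_sharp
    (n : ℕ) (w : ℂ) (hw : w ≠ 0)
    (q : Polynomial ℂ)
    (hq : q = Polynomial.C w - Polynomial.C w * (1 - Polynomial.X) ^ n) :
    (∀ z : ℂ, ‖z‖ < 1 → q.eval z ≠ w) ∧
      (∀ k, 1 ≤ k → k ≤ n →
        ‖q.coeff k‖ = (n.choose k) * ‖w‖) := by
  subst hq
  refine ⟨fun z hz ↦ eval_C_sub_C_mul_one_sub_X_pow_ne n hw ?_, fun k hk _ ↦ ?_⟩
  · rintro rfl
    simp at hz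
  · rw [coeff_C_sub_C_mul_one_sub_X_pow w n (by omega), norm_neg, norm_mul, norm_mul, norm_pow,
      norm_neg, norm_one, one_pow, one_mul, Complex.norm_natCast]
end

section
/- Let q(z) = q̂(1)z + ⋯ + q̂(n)zⁿ be a complex polynomial with q(0) = 0, and define its norm n(q) = max over 1 ≤ k ≤ n of |q̂(k)|/C(n,k). Then the image q(Δ) of the open unit disk contains the open disk of radius n(q) centered at the origin. -/
/-!
If `w` is not attained on the unit disk, every root of `q - w` has modulus at least `1`, so the
Mahler measure of `q - w` is the modulus of its constant coefficient, `‖w‖`. The bound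
`‖coeff k‖ ≤ C(deg, k) · M` of coefficients by the Mahler measure then gives
`‖q̂(k)‖ ≤ C(n, k) ‖w‖` for every `k`, i.e. `n(q) ≤ ‖w‖`.
-/

open Polynomial

namespace Polynomial

theorem mahlerMeasure_eq_norm_coeff_zero_of_one_le_norm_roots {p : ℂ[X]}
    (hroots : ∀ a ∈ p.roots, 1 ≤ ‖a‖) : p.mahlerMeasure = ‖p.coeff 0‖ := by
  have hmax : p.roots.map (fun a ↦ max 1 ‖a‖) = p.roots.map (normHom : ℂ →*₀ ℝ) :=
    Multiset.map_congr rfl fun a ha ↦ max_eq_right (hroots a ha)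
  rw [mahlerMeasure_eq_leadingCoeff_mul_prod_roots, hmax,
    (IsAlgClosed.splits p).coeff_zero_eq_leadingCoeff_mul_prod_roots, norm_mul, norm_mul,
    norm_pow, norm_neg, norm_one, one_pow, one_mul, ← map_multiset_prod]
  rfl

theorem exists_isRoot_norm_lt_one_of_choose_mul_norm_coeff_zero_lt {p : ℂ[X]} {n k : ℕ}
    (hdeg : p.natDegree ≤ n) (hk : n.choose k * ‖p.coeff 0‖ < ‖p.coeff k‖) :
    ∃ z, ‖z‖ < 1 ∧ p.IsRoot z := by
  by_contra! hroots
  have hroots' : ∀ a ∈ p.roots, 1 ≤ ‖a‖ := fun a ha ↦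
    le_of_not_gt fun h ↦ hroots a h (mem_roots'.mp ha).2
  have hbound := norm_coeff_le_choose_mul_mahlerMeasure k p
  rw [mahlerMeasure_eq_norm_coeff_zero_of_one_le_norm_roots hroots'] at hbound
  refine hk.not_ge (hbound.trans ?_)
  gcongr

end Polynomial

theorem range_contains_disk_of_norm
    (n : ℕ) (hn : 1 ≤ n) (qh : ℕ → ℂ)
    (q : ℂ → ℂ) (hq : ∀ z, q z = ∑ k ∈ Finset.Icc 1 n, qh k * z ^ k) :
    ∀ w : ℂ,
      ‖w‖ <
        (Finset.Icc 1 n).sup' (Finset.nonempty_Icc.mpr hn)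
          (fun k => ‖qh k‖ / (n.choose k)) →
      ∃ z : ℂ, ‖z‖ < 1 ∧ q z = w := by
  intro w hw
  obtain ⟨k, hk, hsup⟩ := Finset.exists_mem_eq_sup' (Finset.nonempty_Icc.mpr hn)
    (fun k => ‖qh k‖ / (n.choose k))
  let p : ℂ[X] := ∑ j ∈ Finset.Icc 1 n, monomial j (qh j) - C w
  have hcoeff_zero : p.coeff 0 = -w := by
    simp [p, coeff_monomial]
  have hcoeff : p.coeff k = qh k := by
    have hk0 : k ≠ 0 := by grind
    simp [p, coeff_monomial, coeff_C, hk0, hk]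
  have hdeg : p.natDegree ≤ n :=
    (natDegree_sub_le _ _).trans <| max_le
      (natDegree_sum_le_of_forall_le _ _
        fun j hj ↦ (natDegree_monomial_le _).trans (Finset.mem_Icc.mp hj).2)
      ((natDegree_C w).trans_le n.zero_le)
  have heval (z : ℂ) : p.eval z = q z - w := by
    simp [p, hq, eval_finsetSum, eval_monomial]
  have hchoose : (0 : ℝ) < n.choose k := mod_cast Nat.choose_pos (Finset.mem_Icc.mp hk).2
  obtain ⟨z, hz, hroot⟩ := exists_isRoot_norm_lt_one_of_choose_mul_norm_coeff_zero_lt hdeg (k := k)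
    (by rwa [hcoeff_zero, hcoeff, norm_neg, ← lt_div_iff₀' hchoose, ← hsup])
  exact ⟨z, hz, sub_eq_zero.mp ((heval z).symm.trans hroot)⟩
end

section
/- Let q(z) = z + q₂z² + ⋯ + qₙzⁿ be a complex polynomial of degree at most n with q(0) = 0 and q'(0) = 1. Then the image q(Δ) of the open unit disk contains the open disk of radius 1/n centered at the origin. -/
/-!
If `q(z) = w` had no solution in the unit disk, every root of `q - w` would have modulus at
least `1`. Writing `q - w = c ∏ (z - rᵢ)` over its `k ≤ n` roots, the linear coefficient
`1 = c ∑ᵢ ∏_{j ≠ i} (-rⱼ)` is then at most `k` times the constant coefficient `|c ∏ rᵢ| = |w|`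
in modulus, so `1 ≤ n |w|`.
-/

open Polynomial

variable {K : Type*} [NormedField K]

theorem norm_coeff_one_X_sub_C_mul_le {f : K[X]} {a : K} {k : ℝ} (ha : 1 ≤ ‖a‖)
    (hf : ‖f.coeff 1‖ ≤ k * ‖f.coeff 0‖) :
    ‖((X - C a) * f).coeff 1‖ ≤ (k + 1) * ‖((X - C a) * f).coeff 0‖ := by
  have hcoeff0 : ((X - C a) * f).coeff 0 = -a * f.coeff 0 := by simp [sub_mul]
  have hcoeff1 : ((X - C a) * f).coeff 1 = f.coeff 0 - a * f.coeff 1 := by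
    simp [sub_mul, coeff_X_mul]
  rw [hcoeff0, hcoeff1, norm_mul, norm_neg]
  have hf0 : ‖f.coeff 0‖ ≤ ‖a‖ * ‖f.coeff 0‖ := le_mul_of_one_le_left (norm_nonneg _) ha
  calc ‖f.coeff 0 - a * f.coeff 1‖ ≤ ‖f.coeff 0‖ + ‖a‖ * ‖f.coeff 1‖ := by
        simpa only [norm_mul] using norm_sub_le _ (a * f.coeff 1)
    _ ≤ ‖a‖ * ‖f.coeff 0‖ + ‖a‖ * (k * ‖f.coeff 0‖) := by
        gcongr
    _ = (k + 1) * (‖a‖ * ‖f.coeff 0‖) := by ring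

theorem norm_coeff_one_multiset_prod_X_sub_C_le (s : Multiset K) (hs : ∀ a ∈ s, 1 ≤ ‖a‖) :
    ‖(s.map (X - C ·)).prod.coeff 1‖ ≤ s.card * ‖(s.map (X - C ·)).prod.coeff 0‖ := by
  induction s using Multiset.induction with
  | empty => simp [coeff_one]
  | cons a s ih =>
    rw [Multiset.map_cons, Multiset.prod_cons, Multiset.card_cons, Nat.cast_succ]
    exact norm_coeff_one_X_sub_C_mul_le (hs a (Multiset.mem_cons_self a s))
      (ih fun b hb ↦ hs b (Multiset.mem_cons_of_mem hb))

theorem Polynomial.Splits.norm_coeff_one_le {p : K[X]} (hp : p.Splits)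
    (hroots : ∀ a ∈ p.roots, 1 ≤ ‖a‖) :
    ‖p.coeff 1‖ ≤ p.natDegree * ‖p.coeff 0‖ := by
  have hcoeff (i : ℕ) : p.coeff i = p.leadingCoeff * (p.roots.map (X - C ·)).prod.coeff i := by
    conv_lhs => rw [hp.eq_prod_roots]
    exact coeff_C_mul _
  rw [hcoeff, hcoeff, norm_mul, norm_mul, hp.natDegree_eq_card_roots, mul_left_comm]
  exact mul_le_mul_of_nonneg_left
    (norm_coeff_one_multiset_prod_X_sub_C_le p.roots hroots) (norm_nonneg _)

theorem range_contains_disk_one_div_n_general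
    (n : ℕ) (q : Polynomial ℂ)
    (hdeg : q.natDegree ≤ n) (h0 : q.coeff 0 = 0) (h1 : q.coeff 1 = 1) :
    ∀ w : ℂ, ‖w‖ < 1 / n →
      ∃ z : ℂ, ‖z‖ < 1 ∧ q.eval z = w := by
  intro w hw
  by_contra! hcon
  have hroots : ∀ a ∈ (q - C w).roots, 1 ≤ ‖a‖ := fun a ha ↦ not_lt.1 fun hlt ↦
    hcon a hlt (by simpa [sub_eq_zero] using isRoot_of_mem_roots ha)
  have hbound := (IsAlgClosed.splits (q - C w)).norm_coeff_one_le hroots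
  simp only [coeff_sub, coeff_C, h0, h1, natDegree_sub_C, one_ne_zero, if_false, if_true, sub_zero,
    zero_sub, norm_neg, norm_one] at hbound
  have hn : (0 : ℝ) < n := one_div_pos.1 ((norm_nonneg w).trans_lt hw)
  have hdeg' : (q.natDegree : ℝ) ≤ n := by exact_mod_cast hdeg
  exact lt_irrefl (1 : ℝ) <| calc
    1 ≤ q.natDegree * ‖w‖ := hbound
    _ ≤ n * ‖w‖ := by gcongr
    _ < 1 := (lt_div_iff₀' hn).1 hw

theorem range_contains_disk_one_div_n
    (n : ℕ) (hn : 1 ≤ n) (q : Polynomial ℂ)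
    (hdeg : q.natDegree ≤ n) (h0 : q.coeff 0 = 0) (h1 : q.coeff 1 = 1) :
    ∀ w : ℂ, ‖w‖ < 1 / n →
      ∃ z : ℂ, ‖z‖ < 1 ∧ q.eval z = w :=
  range_contains_disk_one_div_n_general n q hdeg h0 h1
end

section
/- Let q(z) = z + q₂z² + ⋯ + qₙzⁿ be a complex polynomial of degree at most n with q(0) = 0 and q'(0) = 1, and let R > 0. Then the image q(Δ_R) of the open disk of radius R centered at the origin contains the open disk of radius R/n centered at the origin. -/
/-!
If `w` is not attained on `Δ_R`, every root `z` of `q - w` has `‖z‖ ≥ R`. Evaluating the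
logarithmic derivative of `q - w` at `0` gives `(q - w)'(0) / (q - w)(0) = -∑ 1 / z` over these
roots, that is `1 / ‖w‖ ≤ deg q / R ≤ n / R`, so `‖w‖ ≥ R / n`.
-/

open Polynomial

namespace Polynomial

theorem Splits.norm_eval_derivative_mul_le {K : Type*} [NormedField K] {f : K[X]}
    (hf : f.Splits) {x : K} {R : ℝ} (hR : 0 < R) (hroots : ∀ z ∈ f.roots, R ≤ ‖x - z‖) :
    ‖f.derivative.eval x‖ * R ≤ f.natDegree * ‖f.eval x‖ := by
  rcases eq_or_ne f 0 with rfl | hf0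
  · simp
  have hx : f.eval x ≠ 0 := fun hx =>
    (hroots x ((mem_roots hf0).mpr hx)).not_gt (by simpa using hR)
  have hsum : ‖(f.roots.map fun z ↦ 1 / (x - z)).sum‖ ≤ f.roots.card * R⁻¹ := by
    refine (norm_multiset_sum_le _).trans ?_
    rw [Multiset.map_map]
    refine (Multiset.sum_le_card_nsmul _ R⁻¹ fun a ha => ?_).trans (by simp)
    obtain ⟨z, hz, rfl⟩ := Multiset.mem_map.mp ha
    simpa using inv_anti₀ hR (hroots z hz)
  rw [← hf.eval_derivative_div_eval_of_ne_zero hx, norm_div,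
    div_le_iff₀ (norm_pos_iff.mpr hx)] at hsum
  calc ‖f.derivative.eval x‖ * R ≤ f.roots.card * R⁻¹ * ‖f.eval x‖ * R := by gcongr
    _ = f.roots.card * ‖f.eval x‖ := by field_simp
    _ ≤ f.natDegree * ‖f.eval x‖ := by gcongr; exact card_roots' f

end Polynomial

theorem le_natDegree_mul_norm_of_forall_ne {q : ℂ[X]} {w : ℂ} {R : ℝ} (hR : 0 < R)
    (h0 : q.coeff 0 = 0) (h1 : q.coeff 1 = 1) (hw : ∀ z, ‖z‖ < R → q.eval z ≠ w) :
    R ≤ q.natDegree * ‖w‖ := by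
  have hroots : ∀ z ∈ (q - C w).roots, R ≤ ‖0 - z‖ := fun z hz => by
    by_contra! hlt
    exact hw z (by simpa using hlt) (by simpa [sub_eq_zero] using isRoot_of_mem_roots hz)
  simpa [natDegree_sub_C, ← coeff_zero_eq_eval_zero, coeff_derivative, h0, h1] using
    (IsAlgClosed.splits (q - C w)).norm_eval_derivative_mul_le hR hroots

theorem range_contains_disk_R_div_n_general
    (n : ℕ) (R : ℝ) (q : Polynomial ℂ)
    (hdeg : q.natDegree ≤ n) (h0 : q.coeff 0 = 0) (h1 : q.coeff 1 = 1) :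
    ∀ w : ℂ, ‖w‖ < R / n →
      ∃ z : ℂ, ‖z‖ < R ∧ q.eval z = w := by
  intro w hw
  obtain ⟨hR, hn⟩ : 0 < R ∧ (0 : ℝ) < n :=
    (div_pos_iff.mp ((norm_nonneg w).trans_lt hw)).resolve_right
      fun h => (Nat.cast_nonneg n).not_gt h.2
  by_contra! hw'
  have hR_le := le_natDegree_mul_norm_of_forall_ne hR h0 h1 hw'
  have hdeg_mul : (q.natDegree : ℝ) * ‖w‖ ≤ n * ‖w‖ := by gcongr
  have hlt : n * ‖w‖ < R := by rwa [lt_div_iff₀ hn, mul_comm] at hw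
  linarith

theorem range_contains_disk_R_div_n
    (n : ℕ) (hn : 1 ≤ n) (R : ℝ) (hR : 0 < R) (q : Polynomial ℂ)
    (hdeg : q.natDegree ≤ n) (h0 : q.coeff 0 = 0) (h1 : q.coeff 1 = 1) :
    ∀ w : ℂ, ‖w‖ < R / n →
      ∃ z : ℂ, ‖z‖ < R ∧ q.eval z = w :=
  range_contains_disk_R_div_n_general n R q hdeg h0 h1
end

section
/- Let q(z) = z + q₂z² + ⋯ + qₙzⁿ be a complex polynomial of degree at most n with q(0) = 0 and q'(0) = 1, and let R > 0. Then the image q(Δ̄_R) of the closed disk of radius R centered at the origin contains the closed disk of radius R/n centered at the origin. -/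
/-!
Fix `w` and put `p = q - w`, so that `p(0) = -w` and `p'(0) = 1`. Over `ℂ` the logarithmic
derivative splits over the roots: `p'(0) / p(0) = ∑ 1 / (0 - z)`, a sum of at most `n` terms
equal to `-1 / w`. Hence some root satisfies `1 / |z| ≥ 1 / (n |w|)`, i.e. `|z| ≤ n |w| ≤ R`,
and `q(z) = w`.
-/

open Polynomial

theorem Multiset.exists_mem_norm_sum_map_le_card_mul {α E : Type*} [SeminormedAddCommGroup E]
    {s : Multiset α} (hs : s ≠ 0) (f : α → E) :
    ∃ x ∈ s, ‖(s.map f).sum‖ ≤ card s * ‖f x‖ := by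
  obtain ⟨x, hx, hmax⟩ := s.exists_max_image (fun y => ‖f y‖) hs
  refine ⟨x, hx, ?_⟩
  calc ‖(s.map f).sum‖ ≤ ((s.map f).map norm).sum := norm_multiset_sum_le _
    _ ≤ card ((s.map f).map norm) • ‖f x‖ :=
        sum_le_card_nsmul _ _ (by simpa using hmax)
    _ = card s * ‖f x‖ := by simp

theorem Polynomial.Splits.exists_mem_roots_norm_sub_le {K : Type*} [NormedField K] {p : K[X]}
    (hp : p.Splits) {x : K} (hx : p.eval x ≠ 0) (hx' : p.derivative.eval x ≠ 0) :
    ∃ z ∈ p.roots, ‖x - z‖ ≤ p.natDegree * ‖p.eval x / p.derivative.eval x‖ := by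
  have hsum := hp.eval_derivative_div_eval_of_ne_zero hx
  have hroots : p.roots ≠ 0 := fun h => by simp [h, hx, hx'] at hsum
  obtain ⟨z, hz, hle⟩ := Multiset.exists_mem_norm_sum_map_le_card_mul hroots fun z => 1 / (x - z)
  have hxz : 0 < ‖x - z‖ :=
    norm_pos_iff.mpr (sub_ne_zero.mpr fun h => hx (h ▸ isRoot_of_mem_roots hz))
  refine ⟨z, hz, ?_⟩
  have hpx : 0 < ‖p.eval x‖ := norm_pos_iff.mpr hx
  have hpx' : 0 < ‖p.derivative.eval x‖ := norm_pos_iff.mpr hx'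
  rw [← hsum, norm_div, norm_div, norm_one, div_le_iff₀ hpx, mul_one_div, div_mul_eq_mul_div,
    le_div_iff₀ hxz] at hle
  calc ‖x - z‖ ≤ p.roots.card * (‖p.eval x‖ / ‖p.derivative.eval x‖) := by
        rw [← mul_div_assoc, le_div_iff₀ hpx']; linarith
    _ ≤ p.natDegree * ‖p.eval x / p.derivative.eval x‖ := by
        rw [norm_div]; gcongr; exact_mod_cast card_roots' p

theorem range_contains_closed_disk_R_div_n_general
    (n : ℕ) (R : ℝ) (q : Polynomial ℂ)
    (hdeg : q.natDegree ≤ n) (h0 : q.coeff 0 = 0) (h1 : q.coeff 1 = 1) :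
    ∀ w : ℂ, ‖w‖ ≤ R / n →
      ∃ z : ℂ, ‖z‖ ≤ R ∧ q.eval z = w := by
  intro w hw
  have hn : 0 < (n : ℝ) := by
    exact_mod_cast (le_natDegree_of_ne_zero (by simp [h1])).trans hdeg
  have hwR : n * ‖w‖ ≤ R := by rwa [le_div_iff₀' hn] at hw
  rcases eq_or_ne w 0 with rfl | hw0
  · exact ⟨0, by simpa using hwR, by simpa [← coeff_zero_eq_eval_zero] using h0⟩
  set p := q - C w
  have hp0 : p.eval 0 = -w := by simp [p, ← coeff_zero_eq_eval_zero, h0]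
  have hp1 : p.derivative.eval 0 = 1 := by
    simp [p, ← coeff_zero_eq_eval_zero, coeff_derivative, h1]
  obtain ⟨z, hz, hle⟩ := (IsAlgClosed.splits p).exists_mem_roots_norm_sub_le
    (x := 0) (by simpa [hp0]) (by simp [hp1])
  refine ⟨z, ?_, by simpa [p, sub_eq_zero] using isRoot_of_mem_roots hz⟩
  have hdeg' : (p.natDegree : ℝ) ≤ n := by exact_mod_cast natDegree_sub_C.trans_le hdeg
  calc ‖z‖ = ‖0 - z‖ := by simp
    _ ≤ p.natDegree * ‖w‖ := by simpa [hp0, hp1] using hle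
    _ ≤ R := (mul_le_mul_of_nonneg_right hdeg' (norm_nonneg w)).trans hwR

theorem range_contains_closed_disk_R_div_n
    (n : ℕ) (hn : 1 ≤ n) (R : ℝ) (hR : 0 < R) (q : Polynomial ℂ)
    (hdeg : q.natDegree ≤ n) (h0 : q.coeff 0 = 0) (h1 : q.coeff 1 = 1) :
    ∀ w : ℂ, ‖w‖ ≤ R / n →
      ∃ z : ℂ, ‖z‖ ≤ R ∧ q.eval z = w :=
  range_contains_closed_disk_R_div_n_general n R q hdeg h0 h1
end

section
/- The covering constant 1/n is sharp: for the polynomial q(z) = (R/n)((1 + z/R)ⁿ − 1) with R > 0, one has q(0) = 0, q'(0) = 1, and the image q(Δ_R) of the open disk of radius R does not contain any open disk of radius strictly greater than R/n centered at the origin; in particular the point −R/n is not in q(Δ_R). -/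
/-!
The value `-R/n` is exactly `q(-R)`, and `-R` is the only preimage of `-R/n` because it is the
only zero of `(1 + z/R)ⁿ`. Since `-R` lies on the boundary of `Δ_R`, every disk about `0` of
radius `> R/n` contains a point outside `q(Δ_R)`.
-/

open Polynomial

section CoveringPoly

variable {K : Type*} [Field K]

noncomputable abbrev coveringPoly (r : K) (n : ℕ) : K[X] :=
  C (r / n) * ((1 + C r⁻¹ * X) ^ n - 1)

theorem eval_coveringPoly (r : K) (n : ℕ) (z : K) :
    (coveringPoly r n).eval z = r / n * ((1 + r⁻¹ * z) ^ n - 1) := by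
  simp only [coveringPoly, eval_mul, eval_C, eval_sub, eval_pow, eval_add, eval_one, eval_X]

theorem eval_coveringPoly_zero (r : K) (n : ℕ) : (coveringPoly r n).eval 0 = 0 := by
  simp

theorem derivative_coveringPoly_eval_zero {r : K} {n : ℕ} (hr : r ≠ 0) (hn : (n : K) ≠ 0) :
    (coveringPoly r n).derivative.eval 0 = 1 := by
  simp only [coveringPoly, derivative_mul, derivative_C, derivative_sub, derivative_pow,
    derivative_add, derivative_one, derivative_X, eval_add, eval_mul, eval_sub, eval_C,
    eval_pow, eval_X, eval_one, eval_zero, mul_zero, add_zero, one_pow]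
  field_simp
  ring

theorem eq_neg_of_eval_coveringPoly_eq_neg {r : K} {n : ℕ} (hr : r ≠ 0) (hn : (n : K) ≠ 0)
    {z : K} (hz : (coveringPoly r n).eval z = -(r / n)) : z = -r := by
  have hn₀ : n ≠ 0 := fun h => hn (by simp [h])
  have hpow : (1 + r⁻¹ * z) ^ n = 0 := by
    rw [eval_coveringPoly] at hz
    have hcancel := mul_left_cancel₀ (div_ne_zero hr hn) (hz.trans (mul_neg_one _).symm)
    linear_combination hcancel
  have hlin : 1 + r⁻¹ * z = 0 := pow_eq_zero_iff hn₀ |>.mp hpow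
  field_simp at hlin
  linear_combination hlin

end CoveringPoly

theorem covering_constant_sharp
    (n : ℕ) (hn : 1 ≤ n) (R : ℝ) (hR : 0 < R)
    (q : Polynomial ℂ)
    (hq : q = Polynomial.C ((R : ℂ) / n) *
        ((1 + Polynomial.C ((R : ℂ))⁻¹ * Polynomial.X) ^ n - 1)) :
    q.eval 0 = 0 ∧ q.derivative.eval 0 = 1 ∧
      (∀ ε : ℝ, R / n < ε →
        ¬ ∀ w : ℂ, ‖w‖ < ε →
            ∃ z : ℂ, ‖z‖ < R ∧ q.eval z = w) ∧
      (∀ z : ℂ, ‖z‖ < R → q.eval z ≠ -((R : ℂ) / n)) := by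
  change q = coveringPoly (R : ℂ) n at hq
  subst hq
  have hRC : (R : ℂ) ≠ 0 := by exact_mod_cast hR.ne'
  have hnC : (n : ℂ) ≠ 0 := by exact_mod_cast (by omega : n ≠ 0)
  have omits : ∀ z : ℂ, ‖z‖ < R → (coveringPoly (R : ℂ) n).eval z ≠ -((R : ℂ) / n) := by
    intro z hz hqz
    rw [eq_neg_of_eval_coveringPoly_eq_neg hRC hnC hqz, norm_neg, Complex.norm_real,
      Real.norm_of_nonneg hR.le] at hz
    exact lt_irrefl R hz
  refine ⟨eval_coveringPoly_zero _ _, derivative_coveringPoly_eval_zero hRC hnC, ?_, omits⟩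
  intro ε hε hcovers
  have hnorm : ‖-((R : ℂ) / n)‖ = R / n := by
    rw [norm_neg, norm_div, Complex.norm_real, Complex.norm_natCast, Real.norm_of_nonneg hR.le]
  obtain ⟨z, hz, hqz⟩ := hcovers _ (hnorm ▸ hε)
  exact omits z hz hqz
end

section
/- Let q(z) = z + q₂z² + ⋯ + qₙzⁿ be a complex polynomial with q(0) = 0 and q'(0) = 1. For every complex number z there exists a point η ∈ ℂ such that q(z) = q(η) and |q(z)| ≥ |η|/n. -/
/-!
Put `w = q z` and `p = q - w`, a polynomial of degree `m ≤ n` with `p 0 = -w`, `p' 0 = 1`, and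
let `η` be a root of `p` of least modulus. By Vieta, `|w| = |c| ∏ |rᵢ|` and
`1 = |c| |e_{m-1}(r)|`, where `c` is the leading coefficient and `rᵢ` the roots. Each of the `m`
products in `e_{m-1}(r)` omits one root, whose modulus is at least `|η|`, so
`|e_{m-1}(r)| |η| ≤ m ∏ |rᵢ|`, i.e. `|η| ≤ m |w| ≤ n |w|`.
-/

open Polynomial

theorem Multiset.pow_card_le_norm_prod {K : Type*} [SeminormedCommRing K] [NormMulClass K]
    [NormOneClass K] {u : Multiset K} {η : K} (hη : ∀ x ∈ u, ‖η‖ ≤ ‖x‖) :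
    ‖η‖ ^ card u ≤ ‖u.prod‖ := by
  rw [show ‖u.prod‖ = (u.map norm).prod from map_multiset_prod (normHom : K →*₀ ℝ) u]
  simpa using prod_map_le_prod_map₀ (fun _ ↦ ‖η‖) _ (fun _ _ ↦ norm_nonneg η) hη

theorem Multiset.norm_esymm_mul_pow_le {K : Type*} [SeminormedCommRing K] [NormMulClass K]
    [NormOneClass K] (s : Multiset K) (k : ℕ) {η : K} (hη : ∀ x ∈ s, ‖η‖ ≤ ‖x‖) :
    ‖s.esymm k‖ * ‖η‖ ^ (card s - k) ≤ (card s).choose k * ‖s.prod‖ := by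
  classical
  have hterm : ∀ t ∈ s.powersetCard k, ‖t.prod‖ * ‖η‖ ^ (card s - k) ≤ ‖s.prod‖ := by
    intro t ht
    obtain ⟨hts, rfl⟩ := mem_powersetCard.mp ht
    have hdecomp : s = t + (s - t) := (add_tsub_cancel_of_le hts).symm
    conv_rhs => rw [hdecomp, prod_add, norm_mul]
    rw [← card_sub hts]
    gcongr
    exact pow_card_le_norm_prod fun x hx ↦ hη x (subset_of_le tsub_le_self hx)
  calc ‖s.esymm k‖ * ‖η‖ ^ (card s - k)
      ≤ ((s.powersetCard k).map fun t ↦ ‖t.prod‖).sum * ‖η‖ ^ (card s - k) := by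
        gcongr
        simpa [esymm, map_map, Function.comp_def] using
          norm_multiset_sum_le ((s.powersetCard k).map prod)
    _ = ((s.powersetCard k).map fun t ↦ ‖t.prod‖ * ‖η‖ ^ (card s - k)).sum :=
        sum_map_mul_right.symm
    _ ≤ ((s.powersetCard k).map fun _ ↦ ‖s.prod‖).sum := sum_map_le_sum_map _ _ hterm
    _ = (card s).choose k * ‖s.prod‖ := by simp [card_powersetCard]

theorem Polynomial.Splits.norm_mul_norm_coeff_one_le {K : Type*} [NormedField K] {p : K[X]}
    (hp : p.Splits) {η : K} (hη : ∀ x ∈ p.roots, ‖η‖ ≤ ‖x‖) :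
    ‖η‖ * ‖p.coeff 1‖ ≤ p.natDegree * ‖p.coeff 0‖ := by
  obtain hdeg | hdeg := Nat.eq_zero_or_pos p.natDegree
  · simp [coeff_eq_zero_of_natDegree_lt (hdeg ▸ zero_lt_one : p.natDegree < 1), hdeg]
  have hcard := splits_iff_card_roots.mp hp
  have hbound := p.roots.norm_esymm_mul_pow_le (p.natDegree - 1) hη
  rw [hcard, Nat.sub_sub_self hdeg, pow_one, Nat.choose_symm hdeg, Nat.choose_one_right] at hbound
  rw [coeff_eq_esymm_roots_of_splits hp hdeg, hp.coeff_zero_eq_leadingCoeff_mul_prod_roots]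
  simp only [norm_mul, norm_pow, norm_neg, norm_one, one_pow, mul_one, one_mul]
  calc ‖η‖ * (‖p.leadingCoeff‖ * ‖p.roots.esymm (p.natDegree - 1)‖)
      = ‖p.leadingCoeff‖ * (‖p.roots.esymm (p.natDegree - 1)‖ * ‖η‖) := by ring
    _ ≤ ‖p.leadingCoeff‖ * (p.natDegree * ‖p.roots.prod‖) := by gcongr
    _ = p.natDegree * (‖p.leadingCoeff‖ * ‖p.roots.prod‖) := by ring

theorem exists_preimage_with_lower_bound_general
    (n : ℕ) (q : Polynomial ℂ)
    (hdeg : q.natDegree ≤ n) (h0 : q.coeff 0 = 0) (h1 : q.coeff 1 = 1) :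
    ∀ z : ℂ, ∃ η : ℂ, q.eval z = q.eval η ∧
      ‖q.eval z‖ ≥ ‖η‖ / n := by
  intro z
  set p := q - C (q.eval z)
  have hp0 : p.coeff 0 = -q.eval z := by simp [p, h0]
  have hp1 : p.coeff 1 = 1 := by simp [p, h1]
  have hp : p ≠ 0 := fun h ↦ by simp [h] at hp1
  have hpos : 1 ≤ p.natDegree := le_natDegree_of_ne_zero (by simp [hp1])
  have hpn : p.natDegree ≤ n := by simpa [p, natDegree_sub_C] using hdeg
  have hsplit : p.Splits := IsAlgClosed.splits p
  obtain ⟨η, hηroot, hηmin⟩ := p.roots.toFinset.exists_min_image norm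
    (by simpa using hsplit.roots_ne_zero (by omega))
  simp only [Multiset.mem_toFinset] at hηroot hηmin
  refine ⟨η, ?_, ?_⟩
  · have hη : p.eval η = 0 := (mem_roots hp).mp hηroot
    rw [eval_sub, eval_C, sub_eq_zero] at hη
    exact hη.symm
  have hbound := hsplit.norm_mul_norm_coeff_one_le hηmin
  rw [hp0, hp1, norm_one, mul_one, norm_neg] at hbound
  rw [ge_iff_le, div_le_iff₀ (by norm_cast; omega)]
  calc ‖η‖ ≤ p.natDegree * ‖q.eval z‖ := hbound
    _ ≤ n * ‖q.eval z‖ := by gcongr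
    _ = ‖q.eval z‖ * n := mul_comm _ _

theorem exists_preimage_with_lower_bound
    (n : ℕ) (hn : 1 ≤ n) (q : Polynomial ℂ)
    (hdeg : q.natDegree ≤ n) (h0 : q.coeff 0 = 0) (h1 : q.coeff 1 = 1) :
    ∀ z : ℂ, ∃ η : ℂ, q.eval z = q.eval η ∧
      ‖q.eval z‖ ≥ ‖η‖ / n :=
  exists_preimage_with_lower_bound_general n q hdeg h0 h1
end

section
/- Let p(z) = p₀ + p₁z + ⋯ + pₙzⁿ be a complex polynomial of degree at most n with n ≥ 1, and let z₁, z₂ ∈ ℂ be points such that p'(z₁) ≠ 0. Then there exists a point ζ ∈ ℂ such that p(ζ) = p(z₂) and |p(z₁) − p(z₂)| ≥ (1/n)·|p'(z₁)|·|z₁ − ζ|. -/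
/-!
Replace `p` by `q = p - p(z₂)`, which has the same derivative and vanishes at `z₂`, and let `ζ` be
a root of `q` nearest to `z₁`. Since `q'/q = ∑ 1/(z - a)` over the at most `n` roots `a` of `q`,
each of which is at distance at least `|z₁ - ζ|` from `z₁`, we get
`|q'(z₁)| ≤ n |q(z₁)| / |z₁ - ζ|`.
-/

open Polynomial

namespace Polynomial

variable {K : Type*} [NormedField K] {f : K[X]} {x ζ : K}

theorem Splits.norm_eval_derivative_mul_le_s11 (hf : f.Splits) (hx : f.eval x ≠ 0)
    (hζ : ζ ∈ f.roots) (hmin : ∀ a ∈ f.roots, ‖x - ζ‖ ≤ ‖x - a‖) :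
    ‖f.derivative.eval x‖ * ‖x - ζ‖ ≤ f.roots.card * ‖f.eval x‖ := by
  have hdist : 0 < ‖x - ζ‖ := by
    refine norm_pos_iff.mpr (sub_ne_zero.mpr ?_)
    rintro rfl
    exact hx (isRoot_of_mem_roots hζ)
  have hsum : ‖(f.roots.map fun a ↦ 1 / (x - a)).sum‖ ≤ f.roots.card * ‖x - ζ‖⁻¹ := by
    refine (norm_multiset_sum_le (f.roots.map fun a ↦ 1 / (x - a))).trans ?_
    rw [Multiset.map_map, ← Multiset.card_map (fun a ↦ ‖1 / (x - a)‖), ← nsmul_eq_mul]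
    refine Multiset.sum_le_card_nsmul _ _ fun t ht ↦ ?_
    obtain ⟨a, ha, rfl⟩ := Multiset.mem_map.mp ht
    simpa using inv_anti₀ hdist (hmin a ha)
  calc ‖f.derivative.eval x‖ * ‖x - ζ‖
      = ‖f.eval x‖ * ‖(f.roots.map fun a ↦ 1 / (x - a)).sum‖ * ‖x - ζ‖ := by
        rw [hf.eval_derivative_eq_eval_mul_sum hx, norm_mul]
    _ ≤ ‖f.eval x‖ * (f.roots.card * ‖x - ζ‖⁻¹) * ‖x - ζ‖ := by gcongr
    _ = f.roots.card * ‖f.eval x‖ := by field_simp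

theorem exists_isRoot_norm_eval_derivative_mul_le [IsAlgClosed K] {y : K}
    (hx : f.eval x ≠ 0) (hy : f.IsRoot y) :
    ∃ ζ, f.IsRoot ζ ∧ ‖f.derivative.eval x‖ * ‖x - ζ‖ ≤ f.natDegree * ‖f.eval x‖ := by
  classical
  have hf : f ≠ 0 := by
    rintro rfl
    exact hx eval_zero
  obtain ⟨ζ, hζ, hmin⟩ := f.roots.toFinset.exists_min_image (fun a ↦ ‖x - a‖)
    ⟨y, Multiset.mem_toFinset.mpr ((mem_roots hf).mpr hy)⟩
  rw [Multiset.mem_toFinset] at hζ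
  refine ⟨ζ, isRoot_of_mem_roots hζ, ?_⟩
  calc ‖f.derivative.eval x‖ * ‖x - ζ‖ ≤ f.roots.card * ‖f.eval x‖ :=
        (IsAlgClosed.splits f).norm_eval_derivative_mul_le_s11 hx hζ
          fun a ha ↦ hmin a (Multiset.mem_toFinset.mpr ha)
    _ ≤ f.natDegree * ‖f.eval x‖ := by gcongr; exact card_roots' f

end Polynomial

theorem covering_theorem_for_polynomials_general
    (n : ℕ) (p : Polynomial ℂ) (hdeg : p.natDegree ≤ n)
    (z₁ z₂ : ℂ) :
    ∃ ζ : ℂ, p.eval ζ = p.eval z₂ ∧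
      ‖p.eval z₁ - p.eval z₂‖ ≥
        (1 / n) * ‖p.derivative.eval z₁‖ * ‖z₁ - ζ‖ := by
  set q := p - C (p.eval z₂)
  have hq : ∀ z, q.eval z = p.eval z - p.eval z₂ := fun z ↦ by simp [q]
  by_cases hz₁ : q.eval z₁ = 0
  · exact ⟨z₁, by rwa [hq, sub_eq_zero] at hz₁, by simp⟩
  obtain ⟨ζ, hζ, hbound⟩ :=
    exists_isRoot_norm_eval_derivative_mul_le hz₁ (show q.IsRoot z₂ by simp [q])
  rw [derivative_sub, derivative_C, sub_zero, natDegree_sub_C, hq] at hbound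
  refine ⟨ζ, by rwa [IsRoot, hq, sub_eq_zero] at hζ, ?_⟩
  have hdeg' : (p.natDegree : ℝ) / n ≤ 1 := div_le_one_of_le₀ (by exact_mod_cast hdeg) n.cast_nonneg
  calc (1 / n : ℝ) * ‖p.derivative.eval z₁‖ * ‖z₁ - ζ‖
      ≤ (1 / n) * (p.natDegree * ‖p.eval z₁ - p.eval z₂‖) := by
        rw [mul_assoc]; gcongr
    _ = (p.natDegree / n) * ‖p.eval z₁ - p.eval z₂‖ := by ring
    _ ≤ ‖p.eval z₁ - p.eval z₂‖ := mul_le_of_le_one_left (norm_nonneg _) hdeg'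

theorem covering_theorem_for_polynomials
    (n : ℕ) (hn : 1 ≤ n) (p : Polynomial ℂ) (hdeg : p.natDegree ≤ n)
    (z₁ z₂ : ℂ) (hp' : p.derivative.eval z₁ ≠ 0) :
    ∃ ζ : ℂ, p.eval ζ = p.eval z₂ ∧
      ‖p.eval z₁ - p.eval z₂‖ ≥
        (1 / n) * ‖p.derivative.eval z₁‖ * ‖z₁ - ζ‖ :=
  covering_theorem_for_polynomials_general n p hdeg z₁ z₂
end

section
/- Let q(z) = q̂(1)z + ⋯ + q̂(n)zⁿ be a nonzero complex polynomial with q(0) = 0 and degree at most n. Then q(Δ) contains an open neighborhood of 0; specifically it contains the open disk of radius max₁≤k≤n |q̂(k)|/C(n,k) > 0 centered at 0. -/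
/-!
If `q(z) = w` had no solution in the unit disk, every root of the polynomial `q - w` would
have modulus at least `1`. By Vieta's formulas, the `k`-th coefficient of such a polynomial
of degree `d` is, up to the leading coefficient, a sum of `C(d, k)` products of roots, each
dominated by the product of all the roots, i.e. by `|constant term / leading coefficient|`.
Hence `|q̂(k)| ≤ C(n, k) |w|` for every `k`, so `|w|` is at least `max_k |q̂(k)| / C(n, k)`.
-/

open Polynomial Finset

namespace Multiset

variable {K : Type*} [NormedField K]

theorem norm_prod (s : Multiset K) : ‖s.prod‖ = (s.map norm).prod :=
  map_multiset_prod (normHom : K →*₀ ℝ) s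

theorem norm_prod_le_prod_map_norm_of_le {s t : Multiset K} (hts : t ≤ s)
    (hs : ∀ z ∈ s, 1 ≤ ‖z‖) : ‖t.prod‖ ≤ (s.map norm).prod := by
  obtain ⟨u, rfl⟩ := le_iff_exists_add.1 hts
  rw [norm_prod, map_add, prod_add]
  exact le_mul_of_one_le_right (prod_map_nonneg fun _ _ => norm_nonneg _)
    (one_le_prod_map fun z hz => hs z (mem_add.2 (Or.inr hz)))

theorem norm_esymm_le (s : Multiset K) (hs : ∀ z ∈ s, 1 ≤ ‖z‖) (j : ℕ) :
    ‖s.esymm j‖ ≤ (card s).choose j * (s.map norm).prod := by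
  calc ‖s.esymm j‖ ≤ (((s.powersetCard j).map prod).map norm).sum := norm_multiset_sum_le _
    _ ≤ card (((s.powersetCard j).map prod).map norm) • (s.map norm).prod := by
      refine sum_le_card_nsmul _ _ fun x hx => ?_
      rw [map_map] at hx
      obtain ⟨t, ht, rfl⟩ := mem_map.1 hx
      exact norm_prod_le_prod_map_norm_of_le (mem_powersetCard.1 ht).1 hs
    _ = (card s).choose j * (s.map norm).prod := by
      simp only [card_map, card_powersetCard, nsmul_eq_mul]

end Multiset

namespace Polynomial

variable {K : Type*} [NormedField K]

theorem norm_coeff_le_choose_mul_norm_coeff_zero_s13 {P : K[X]} (hP : P.Splits)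
    (hroots : ∀ z ∈ P.roots, 1 ≤ ‖z‖) (k : ℕ) :
    ‖P.coeff k‖ ≤ P.natDegree.choose k * ‖P.coeff 0‖ := by
  rcases lt_or_ge P.natDegree k with hk | hk
  · rw [coeff_eq_zero_of_natDegree_lt hk, norm_zero]
    positivity
  have hcoeff_zero : ‖P.coeff 0‖ = ‖P.leadingCoeff‖ * (P.roots.map norm).prod := by
    rw [coeff_zero_eq_eval_zero, hP.eval_eq_prod_roots, norm_mul, Multiset.norm_prod,
      Multiset.map_map]
    simp
  have hesymm := P.roots.norm_esymm_le hroots (P.natDegree - k)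
  rw [splits_iff_card_roots.1 hP, Nat.choose_symm hk] at hesymm
  rw [coeff_eq_esymm_roots_of_splits hP hk, hcoeff_zero, norm_mul, norm_mul, norm_pow, norm_neg,
    norm_one, one_pow, mul_one, mul_left_comm]
  exact mul_le_mul_of_nonneg_left hesymm (norm_nonneg _)

theorem norm_coeff_le_choose_mul_norm_coeff_zero_of_forall_norm_lt_one [IsAlgClosed K]
    {P : K[X]} (hP : ∀ z, ‖z‖ < 1 → P.eval z ≠ 0) (k : ℕ) :
    ‖P.coeff k‖ ≤ P.natDegree.choose k * ‖P.coeff 0‖ :=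
  norm_coeff_le_choose_mul_norm_coeff_zero_s13 (IsAlgClosed.splits P)
    (fun z hz => not_lt.1 fun hz1 => hP z hz1 (isRoot_of_mem_roots hz)) k

end Polynomial

theorem range_contains_neighborhood_of_zero
    (n : ℕ) (qh : ℕ → ℂ)
    (hne : ∃ k ∈ Finset.Icc 1 n, qh k ≠ 0)
    (q : ℂ → ℂ) (hq : ∀ z, q z = ∑ k ∈ Finset.Icc 1 n, qh k * z ^ k) :
    0 < (Finset.Icc 1 n).sup'
        (by obtain ⟨k, hk, _⟩ := hne; exact ⟨k, hk⟩)
        (fun k => ‖qh k‖ / (n.choose k)) ∧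
    ∀ w : ℂ,
      ‖w‖ <
        (Finset.Icc 1 n).sup'
          (by obtain ⟨k, hk, _⟩ := hne; exact ⟨k, hk⟩)
          (fun k => ‖qh k‖ / (n.choose k)) →
      ∃ z : ℂ, ‖z‖ < 1 ∧ q z = w := by
  obtain ⟨k₀, hk₀, hqk₀⟩ := hne
  have hchoose_pos : ∀ k ∈ Icc 1 n, (0 : ℝ) < n.choose k := fun k hk => by
    exact_mod_cast Nat.choose_pos (mem_Icc.1 hk).2
  refine ⟨(div_pos (norm_pos_iff.2 hqk₀) (hchoose_pos k₀ hk₀)).trans_le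
    (le_sup' (fun k => ‖qh k‖ / (n.choose k)) hk₀), fun w hw => ?_⟩
  by_contra! hcon
  set P : ℂ[X] := ∑ k ∈ Icc 1 n, C (qh k) * X ^ k - C w
  have hcoeff (k : ℕ) :
      P.coeff k = (if k ∈ Icc 1 n then qh k else 0) - if k = 0 then w else 0 := by
    simp [P, coeff_C]
  have hdeg : P.natDegree ≤ n := natDegree_le_iff_coeff_eq_zero.2 fun N hN => by
    rw [hcoeff, if_neg (by simp; omega), if_neg (by omega), sub_zero]
  have hzeros : ∀ z, ‖z‖ < 1 → P.eval z ≠ 0 := fun z hz => by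
    simpa [P, eval_finsetSum, ← hq, sub_eq_zero] using hcon z hz
  obtain ⟨k, hk, hwk⟩ := (lt_sup'_iff _).1 hw
  have hbound : ‖qh k‖ ≤ n.choose k * ‖w‖ := calc
    ‖qh k‖ ≤ P.natDegree.choose k * ‖w‖ := by
      simpa [hcoeff, hk, Nat.one_le_iff_ne_zero.1 (mem_Icc.1 hk).1] using
        norm_coeff_le_choose_mul_norm_coeff_zero_of_forall_norm_lt_one hzeros k
    _ ≤ n.choose k * ‖w‖ := by gcongr
  rw [lt_div_iff₀ (hchoose_pos k hk), mul_comm] at hwk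
  exact hbound.not_gt hwk
end
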